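/- The unique non-bisectional normalized fractal mold of granularity 2 is the one generated by the period {1, φ}: if M is a fractal normalized ℝ-mold of granularity 2 with first period {1, 1+p} for some real p with 0 < p < 1 and p ≠ 1/2, then p = φ − 1 = (−1+√5)/2, i.e. the first period of M is {1, φ}. -/
import Mathlib


/-- An `ℝ`-mold: a strictly increasing sequence of nonnegative reals starting at `0`,
whose consecutive differences become arbitrarily small, closed under addition. -/
def IsRMold (μ : ℕ → ℝ) : Prop :=
  StrictMono μ ∧ (∀ i, 0 ≤ μ i) ∧ μ 0 = 0 ∧
    (∀ ε : ℝ, 0 < ε → ∃ n₀ : ℕ, ∀ n ≥ n₀, μ (n + 1) - μ n < ε) ∧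
    (∀ i j : ℕ, ∃ k : ℕ, μ k = μ i + μ j)

/-- The `i`-th period of a (normalized) mold `μ`: elements `x` of the mold with `i ≤ x < i + 1`. -/
def period (μ : ℕ → ℝ) (i : ℕ) : Set ℝ :=
  {x | (∃ k, μ k = x) ∧ (i : ℝ) ≤ x ∧ x < (i : ℝ) + 1}

/-- A normalized mold is fractal if its periods can be enumerated as
`π_i = {i + τ^{(i)}_0, …, i + τ^{(i)}_{l_i - 1}}` with
`0 = τ^{(i)}_0 < ⋯ < τ^{(i)}_{l_i - 1} < τ^{(i)}_{l_i} = 1`, and each period is obtained by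
dividing each interval of the previous one in the same proportions as the first period divides
`[0, 1]`:
`π_{i+1} = ⋃_{r < l_i} ⋃_{s < l} {(i+1) + τ^{(i)}_r + τ^{(1)}_s (τ^{(i)}_{r+1} - τ^{(i)}_r)}`. -/
def IsFractal (μ : ℕ → ℝ) : Prop :=
  ∃ (l : ℕ → ℕ) (τ : ℕ → ℕ → ℝ),
    (∀ i, 0 < l i) ∧
    (∀ i, τ i 0 = 0) ∧
    (∀ i, τ i (l i) = 1) ∧
    (∀ i, ∀ r s : ℕ, r < s → s ≤ l i → τ i r < τ i s) ∧
    (∀ i, period μ i = {x | ∃ r < l i, x = (i : ℝ) + τ i r}) ∧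
    (∀ i, period μ (i + 1) =
      {x | ∃ r < l i, ∃ s < l 1, x = ((i : ℝ) + 1) + τ i r + τ 1 s * (τ i (r + 1) - τ i r)})

/-- The golden ratio `φ = (1 + √5) / 2`. -/
noncomputable def phi : ℝ := (1 + Real.sqrt 5) / 2

/-- Given `p ∈ (0,1)` (with `q = 1 - p`), the recursively defined division functions
`f_ℓ : {0, …, 2^ℓ - 1} → [0, 1)`:
`f₀ 0 = 0`, `f_{ℓ+1} n = p * f_ℓ n` if `n < 2^ℓ`, and `f_{ℓ+1} n = p + q * f_ℓ (n - 2^ℓ)`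
otherwise. -/
noncomputable def fcut (p : ℝ) : ℕ → ℕ → ℝ
  | 0, _ => 0
  | ℓ + 1, n => if n < 2 ^ ℓ then p * fcut p ℓ n else p + (1 - p) * fcut p ℓ (n - 2 ^ ℓ)

lemma four_chain_pigeonhole (p a b c d : ℝ) 
    (m1 : a = 0 ∨ a = p*p ∨ a = p ∨ a = p + p*(1-p))
    (m2 : b = 0 ∨ b = p*p ∨ b = p ∨ b = p + p*(1-p))
    (m3 : c = 0 ∨ c = p*p ∨ c = p ∨ c = p + p*(1-p))
    (m4 : d = 0 ∨ d = p*p ∨ d = p ∨ d = p + p*(1-p))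
    (hq1 : 0 < p*p) (hq2 : p*p < p) (hq3 : p < p + p*(1-p))
    (o1 : 0 < a) (o2 : a < b) (o3 : b < c) (o4 : c < d) : False := by
  rcases m1 with h1|h1|h1|h1 <;> rcases m2 with h2|h2|h2|h2 <;>
    rcases m3 with h3|h3|h3|h3 <;> rcases m4 with h4|h4|h4|h4 <;> linarith

set_option maxHeartbeats 2000000 in
/-- the unique non-bisectional normalized fractal mold of granularity 2 is the
one generated by `{1, φ}`: if `M` is a fractal normalized ℝ-mold of granularity `2` with first
period `{1, 1 + p}`, `0 < p < 1`, `p ≠ 1/2`, then `p = φ - 1 = (-1 + √5)/2`, i.e. the first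
period of `M` is `{1, φ}`. -/
theorem nonbisectional_fractal_is_golden (μ : ℕ → ℝ) (p : ℝ)
    (hmold : IsRMold μ) (hnorm : μ 1 = 1) (hfr : IsFractal μ)
    (hgran : (period μ 1).ncard = 2)
    (hper : period μ 1 = {1, 1 + p})
    (hp0 : 0 < p) (hp1 : p < 1) (hpb : p ≠ 1 / 2) :
    p = phi - 1 ∧ p = (-1 + Real.sqrt 5) / 2 ∧ period μ 1 = {1, phi} := by
  obtain ⟨hsm, hnn, hμ0, hsmall, hadd⟩ := hmold
  obtain ⟨l, τ, hlpos, hτ0, hτl, hmono, henum, hnext⟩ := hfr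
  -- every τ 1 r (r < l 1) is 0 or p
  have hmem1 : ∀ r < l 1, τ 1 r = 0 ∨ τ 1 r = p := by
    intro r hr
    have hx : ((1:ℕ) : ℝ) + τ 1 r ∈ period μ 1 := by
      rw [henum 1]; exact ⟨r, hr, rfl⟩
    rw [hper] at hx
    simp only [Set.mem_insert_iff, Set.mem_singleton_iff] at hx
    push_cast at hx
    rcases hx with hx | hx
    · left; linarith
    · right; linarith
  have hp_in : (1 + p : ℝ) ∈ period μ 1 := by
    rw [hper]; right; rfl
  obtain ⟨r1, hr1, hr1e⟩ : ∃ r < l 1, (1 + p : ℝ) = ((1:ℕ):ℝ) + τ 1 r := by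
    rw [henum 1] at hp_in; exact hp_in
  have hτr1 : τ 1 r1 = p := by push_cast at hr1e; linarith
  have hr1ne : r1 ≠ 0 := by
    intro h; rw [h, hτ0 1] at hτr1; exact absurd hτr1.symm (ne_of_gt hp0)
  have hl1 : l 1 = 2 := by
    by_contra h
    have h3 : 3 ≤ l 1 := by omega
    have m1 := hmem1 1 (by omega)
    have m2 := hmem1 2 (by omega)
    have o1 : τ 1 0 < τ 1 1 := hmono 1 0 1 (by omega) (by omega)
    have o2 : τ 1 1 < τ 1 2 := hmono 1 1 2 (by omega) (by omega)
    rw [hτ0 1] at o1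
    rcases m1 with h1 | h1 <;> rcases m2 with h2 | h2 <;> linarith
  have ht11 : τ 1 1 = p := by
    obtain rfl : r1 = 1 := by omega
    exact hτr1
  have ht12 : τ 1 2 = 1 := by rw [← hl1]; exact hτl 1
  have hP2 : ∀ x : ℝ, x ∈ period μ 2 ↔
      (x = 2 ∨ x = 2 + p * p ∨ x = 2 + p ∨ x = 2 + p + p * (1 - p)) := by
    intro x
    rw [show (2:ℕ) = 1 + 1 from rfl, hnext 1]
    constructor
    · rintro ⟨r, hr, s, hs, rfl⟩
      rw [hl1] at hr hs
      interval_cases r <;> interval_cases s <;>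
        simp only [show (0:ℕ)+1 = 1 from rfl, show (1:ℕ)+1 = 2 from rfl,
          hτ0, ht11, ht12, Nat.cast_one] <;>
        ring_nf <;> tauto
    · rintro (rfl | rfl | rfl | rfl)
      · refine ⟨0, by omega, 0, by omega, ?_⟩
        simp [hτ0]
        norm_num
      · refine ⟨0, by omega, 1, by omega, ?_⟩
        simp only [show (0:ℕ)+1 = 1 from rfl, hτ0, ht11, ht12, Nat.cast_one]
        ring
      · refine ⟨1, by omega, 0, by omega, ?_⟩
        simp [hτ0, ht11]
        norm_num
      · refine ⟨1, by omega, 1, by omega, ?_⟩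
        simp only [show (1:ℕ)+1 = 2 from rfl, hτ0, ht11, ht12, Nat.cast_one]
        ring
  -- 2+2p is in the mold
  obtain ⟨k1, hk1⟩ : ∃ k, μ k = 1 + p := hp_in.1
  obtain ⟨k2, hk2⟩ := hadd k1 k1
  rw [hk1] at hk2
  have hk2' : μ k2 = 2 + 2*p := by rw [hk2]; ring
  -- order facts
  have hq1 : 0 < p*p := mul_pos hp0 hp0
  have hq2 : p*p < p := by nlinarith
  have hq3 : p < p + p*(1-p) := by nlinarith
  have hq4 : p + p*(1-p) < 1 := by nlinarith
  have hq5 : p*(1-p) < p := by nlinarith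
  -- p > 1/2
  have hp_half : 1/2 < p := by
    rcases lt_or_gt_of_ne hpb with h | h
    · exfalso
      have hmem : (2 + 2*p : ℝ) ∈ period μ 2 := by
        refine ⟨⟨k2, hk2'⟩, ?_, ?_⟩ <;> push_cast <;> linarith
      rw [hP2] at hmem
      rcases hmem with h1|h1|h1|h1 <;> linarith
    · exact h
  -- τ 2 values
  have hmem2 : ∀ r < l 2, τ 2 r = 0 ∨ τ 2 r = p*p ∨ τ 2 r = p ∨ τ 2 r = p + p*(1-p) := by
    intro r hr
    have hx : ((2:ℕ):ℝ) + τ 2 r ∈ period μ 2 := by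
      rw [henum 2]; exact ⟨r, hr, rfl⟩
    rw [hP2] at hx
    push_cast at hx
    rcases hx with h|h|h|h
    · left; linarith
    · right; left; linarith
    · right; right; left; linarith
    · right; right; right; linarith
  have hin_a : (2 + p*p : ℝ) ∈ period μ 2 := (hP2 _).2 (by tauto)
  have hin_b : (2 + p : ℝ) ∈ period μ 2 := (hP2 _).2 (by tauto)
  have hin_c : (2 + (p + p*(1-p)) : ℝ) ∈ period μ 2 := (hP2 _).2 (by right; right; right; ring)
  rw [henum 2] at hin_a hin_b hin_c
  obtain ⟨ra, hra, hea⟩ := hin_a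
  obtain ⟨rb, hrb, heb⟩ := hin_b
  obtain ⟨rc, hrc, hec⟩ := hin_c
  have hτa : τ 2 ra = p*p := by push_cast at hea; linarith
  have hτb : τ 2 rb = p := by push_cast at heb; linarith
  have hτc : τ 2 rc = p + p*(1-p) := by push_cast at hec; linarith
  have hane : ra ≠ 0 := fun h => by rw [h, hτ0 2] at hτa; linarith
  have hbne : rb ≠ 0 := fun h => by rw [h, hτ0 2] at hτb; linarith
  have hcne : rc ≠ 0 := fun h => by rw [h, hτ0 2] at hτc; linarith
  have hab : ra ≠ rb := fun h => by rw [h, hτb] at hτa; linarith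
  have hac : ra ≠ rc := fun h => by rw [h, hτc] at hτa; linarith
  have hbc : rb ≠ rc := fun h => by rw [h, hτc] at hτb; linarith
  have hl2 : l 2 = 4 := by
    by_contra h
    rcases Nat.lt_or_ge (l 2) 4 with h4 | h4
    · omega
    · have h5 : 5 ≤ l 2 := by omega
      have m1 := hmem2 1 (by omega)
      have m2 := hmem2 2 (by omega)
      have m3 := hmem2 3 (by omega)
      have m4 := hmem2 4 (by omega)
      have o1 : τ 2 0 < τ 2 1 := hmono 2 0 1 (by omega) (by omega)
      have o2 : τ 2 1 < τ 2 2 := hmono 2 1 2 (by omega) (by omega)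
      have o3 : τ 2 2 < τ 2 3 := hmono 2 2 3 (by omega) (by omega)
      have o4 : τ 2 3 < τ 2 4 := hmono 2 3 4 (by omega) (by omega)
      rw [hτ0 2] at o1
      exact four_chain_pigeonhole p _ _ _ _ m1 m2 m3 m4 hq1 hq2 hq3 o1 o2 o3 o4
  have hmono2le : ∀ r s : ℕ, r ≤ s → s ≤ l 2 → τ 2 r ≤ τ 2 s := by
    intro r s hrs hs
    rcases eq_or_lt_of_le hrs with h|h
    · rw [h]
    · exact (hmono 2 r s h hs).le
  have ht20 : τ 2 0 = 0 := hτ0 2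
  have ht21 : τ 2 1 = p*p := by
    have h1 : τ 2 1 ≤ τ 2 ra := hmono2le 1 ra (by omega) (by omega)
    rw [hτa] at h1
    have h2 : 0 < τ 2 1 := by
      have := hmono 2 0 1 (by omega) (by omega)
      rwa [ht20] at this
    rcases hmem2 1 (by omega) with h|h|h|h <;> linarith
  have ht23 : τ 2 3 = p + p*(1-p) := by
    have h1 : τ 2 rc ≤ τ 2 3 := hmono2le rc 3 (by omega) (by omega)
    rw [hτc] at h1
    rcases hmem2 3 (by omega) with h|h|h|h <;> linarith
  have ht22 : τ 2 2 = p := by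
    have h1 := hmono 2 1 2 (by omega) (by omega)
    have h2 := hmono 2 2 3 (by omega) (by omega)
    rw [ht21] at h1; rw [ht23] at h2
    rcases hmem2 2 (by omega) with h|h|h|h <;> linarith
  have ht24 : τ 2 4 = 1 := by rw [← hl2]; exact hτl 2
  -- 2+2p lies in period 3
  have hmem3 : (2 + 2*p : ℝ) ∈ period μ 3 := by
    refine ⟨⟨k2, hk2'⟩, ?_, ?_⟩ <;> push_cast <;> linarith
  rw [show (3:ℕ) = 2 + 1 from rfl, hnext 2] at hmem3
  obtain ⟨r, hr, s, hs, he⟩ := hmem3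
  rw [hl2] at hr; rw [hl1] at hs
  push_cast at he
  have hkey : p*p + p - 1 = 0 := by
    interval_cases r <;> interval_cases s <;>
      simp only [show (0:ℕ)+1=1 from rfl, show (1:ℕ)+1=2 from rfl, show (2:ℕ)+1=3 from rfl,
        show (3:ℕ)+1=4 from rfl, ht20, ht21, ht22, ht23, ht24, hτ0, ht11] at he
    · exact absurd (by linarith : p = 1/2) hpb
    · have hfac : (p-1)*(p*p+p-1) = 0 := by linear_combination -he
      rcases mul_eq_zero.1 hfac with h|h
      · exfalso; linarith
      · linarith
    · exfalso
      have hfac : (p-1)^2 = 0 := by linear_combination -he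
      have h2 : p - 1 = 0 := by
        have := sq_nonneg (p-1)
        nlinarith [sq_abs (p-1)]
      linarith
    · exfalso
      have hfac : (p-1)*(p*p-p+1) = 0 := by linear_combination he
      rcases mul_eq_zero.1 hfac with h|h
      · linarith
      · have h3 : (p-1/2)^2 = -(3:ℝ)/4 := by linear_combination h
        have := sq_nonneg (p-1/2)
        linarith
    · exfalso; linarith
    · exfalso
      have hfac : (p-1)*(p*p+1) = 0 := by linear_combination he
      rcases mul_eq_zero.1 hfac with h|h
      · linarith
      · linarith
    · exfalso
      have hfac : (p-1)*(p+1) = 0 := by linear_combination he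
      rcases mul_eq_zero.1 hfac with h|h
      · linarith
      · linarith
    · exfalso
      have hfac : (p-1)*(p*p-2*p-1) = 0 := by linear_combination -he
      rcases mul_eq_zero.1 hfac with h|h
      · linarith
      · linarith
  have hs5 : Real.sqrt 5 = 2*p + 1 := by
    rw [show (5:ℝ) = (2*p+1)^2 by nlinarith]
    exact Real.sqrt_sq (by linarith)
  have hphi : phi = 1 + p := by unfold phi; rw [hs5]; ring
  refine ⟨by rw [hphi]; ring, by rw [hs5]; ring, ?_⟩
  rw [hper, hphi]
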